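/- Let b ≥ 2 and τ ∈ {τ^b_2, τ^b_3}, set E_0 = {(m,m) : 1 ≤ m ≤ b} ∪ {0}, and let φ be an instance of cubic monotone one-in-three 3-SAT with m clauses. If (sup, sig) is a τ-region of the translator T_τ such that sig(z) ∈ E_0 and sig(k) ∈ {(0,1), (1,0)}, then φ has a one-in-three model. -/

import Mathlib

/-! ## Transition systems -/

/-- A transition system over ambient state type `S` and event type `E`:
a set of states, a set of events, and a (deterministic or not) labeled
transition relation whose transitions stay inside the state/event sets. -/
structure TS (S E : Type) where
  states : Set S
  events : Set E
  tr : S → E → S → Prop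
  tr_mem : ∀ ⦃s e s'⦄, tr s e s' → s ∈ states ∧ e ∈ events ∧ s' ∈ states

/-- Event `e` occurs at state `s`. -/
def TS.occurs {S E : Type} (A : TS S E) (e : E) (s : S) : Prop := ∃ s', A.tr s e s'

/-! ## The types of nets `τ^b_t`, `t ∈ {0,1,2,3}` -/

/-- Events of the types of nets: pairs `(m,n)` or group events `c ∈ ℤ_{b+1}`. -/
inductive Tev where
  | pr (m n : ℕ)
  | gr (c : ℕ)
deriving DecidableEq

def Tev.minus : Tev → ℕ | .pr m _ => m | .gr _ => 0
def Tev.plus : Tev → ℕ | .pr _ n => n | .gr _ => 0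
def Tev.absv : Tev → ℕ | .pr _ _ => 0 | .gr c => c

/-- Membership in the event set of the type `τ^b_t`:
for `t ∈ {1,3}` (pure types) the pair events `(m,n)` with `m,n ≥ 1` are discarded;
for `t ∈ {2,3}` the pair `(0,0)` is discarded and the group events `0,…,b` are present;
for `t ∈ {0,1}` there are no group events. -/
def tevOk (b t : ℕ) : Tev → Prop
  | .pr m n => m ≤ b ∧ n ≤ b ∧ ((t = 1 ∨ t = 3) → (m = 0 ∨ n = 0)) ∧
      ((t = 2 ∨ t = 3) → ¬(m = 0 ∧ n = 0))
  | .gr c => c ≤ b ∧ (t = 2 ∨ t = 3)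

/-- The partial transition function of the types `τ^b_t` on the states `{0,…,b}`. -/
def tevStep (b s : ℕ) : Tev → Option ℕ
  | .pr m n => if m ≤ s ∧ s - m + n ≤ b then some (s - m + n) else none
  | .gr c => some ((s + c) % (b + 1))

/-! ## Regions, ESSP and SSP -/

/-- A `τ^b_t`-region of a transition system `A`. -/
structure Region (b t : ℕ) {S E : Type} (A : TS S E) where
  sup : S → ℕ
  sig : E → Tev
  sup_le : ∀ s ∈ A.states, sup s ≤ b
  sig_ok : ∀ e ∈ A.events, tevOk b t (sig e)
  resp : ∀ ⦃s e s'⦄, A.tr s e s' → tevStep b (sup s) (sig e) = some (sup s')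

/-- A region solves the ESSP atom `(e,s)` if `sig e` does not occur at `sup s` in `τ`. -/
def Region.solvesESSP {b t : ℕ} {S E : Type} {A : TS S E} (R : Region b t A)
    (e : E) (s : S) : Prop :=
  tevStep b (R.sup s) (R.sig e) = none

/-- A region solves the SSP atom `(s,s')` if `sup s ≠ sup s'`. -/
def Region.solvesSSP {b t : ℕ} {S E : Type} {A : TS S E} (R : Region b t A)
    (s s' : S) : Prop :=
  R.sup s ≠ R.sup s'

/-- `A` has the `τ^b_t`-ESSP: every ESSP atom is solvable. -/
def TS.hasESSP (b t : ℕ) {S E : Type} (A : TS S E) : Prop :=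
  ∀ e ∈ A.events, ∀ s ∈ A.states, ¬ A.occurs e s → ∃ R : Region b t A, R.solvesESSP e s

/-- `A` has the `τ^b_t`-SSP: every SSP atom is solvable. -/
def TS.hasSSP (b t : ℕ) {S E : Type} (A : TS S E) : Prop :=
  ∀ s ∈ A.states, ∀ s' ∈ A.states, s ≠ s' → ∃ R : Region b t A, R.solvesSSP s s'

/-- `A` is `τ^b_t`-feasible. -/
def TS.feasible (b t : ℕ) {S E : Type} (A : TS S E) : Prop :=
  A.hasESSP b t ∧ A.hasSSP b t

/-! ## Combinators: linear TSs, relabeled states, unions -/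

/-- The linear TS given by the word `w`: states `0,…,w.length`, and an
`e`-labeled transition from `s` to `s+1` whenever `w[s] = e`. -/
def TS.chain {E : Type} (w : List E) : TS ℕ E where
  states := {s | s ≤ w.length}
  events := {e | e ∈ w}
  tr s e s' := w[s]? = some e ∧ s' = s + 1
  tr_mem := by
    rintro s e s' ⟨h, rfl⟩
    have hs : s < w.length := by
      by_contra hc
      rw [List.getElem?_eq_none (Nat.le_of_not_lt hc)] at h
      cases h
    obtain ⟨hlt, rfl⟩ := List.getElem?_eq_some_iff.mp h
    exact ⟨Nat.le_of_lt hs, List.getElem_mem hlt, hs⟩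

/-- Renaming the states of a TS along `f`. -/
def TS.mapStates {S S' E : Type} (f : S → S') (A : TS S E) : TS S' E where
  states := f '' A.states
  events := A.events
  tr s e s' := ∃ a a', A.tr a e a' ∧ s = f a ∧ s' = f a'
  tr_mem := by
    rintro s e s' ⟨a, a', h, rfl, rfl⟩
    obtain ⟨h1, h2, h3⟩ := A.tr_mem h
    exact ⟨⟨a, h1, rfl⟩, h2, ⟨a', h3, rfl⟩⟩

/-- The union `U(A_i)_{i : ι}` of a family of TSs over the same ambient types. -/
def TS.unionFam {ι S E : Type} (F : ι → TS S E) : TS S E where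
  states := ⋃ i, (F i).states
  events := ⋃ i, (F i).events
  tr s e s' := ∃ i, (F i).tr s e s'
  tr_mem := by
    rintro s e s' ⟨i, h⟩
    obtain ⟨h1, h2, h3⟩ := (F i).tr_mem h
    exact ⟨Set.mem_iUnion.2 ⟨i, h1⟩, Set.mem_iUnion.2 ⟨i, h2⟩, Set.mem_iUnion.2 ⟨i, h3⟩⟩

/-- The SSP for a union: all SSP atoms given by distinct states of the *same*
constituent are solvable by regions of the union. -/
def unionSSP (b t : ℕ) {ι S E : Type} (F : ι → TS S E) : Prop :=
  ∀ i : ι, ∀ s ∈ (F i).states, ∀ s' ∈ (F i).states, s ≠ s' →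
    ∃ R : Region b t (TS.unionFam F), R.solvesSSP s s'
/-! ## Cubic monotone one-in-three 3-SAT -/

/-- An instance `φ = {C_0,…,C_{m-1}}` of cubic monotone one-in-three 3-SAT with
variables `V(φ) = {X_0,…,X_{m-1}}` (identified with `Fin m`): every clause
`C_i = {X_{i,0}, X_{i,1}, X_{i,2}}` consists of three distinct variables and every
variable occurs in exactly three clauses. -/
structure SatInstance (m : ℕ) where
  C : Fin m → Fin 3 → Fin m
  clause_distinct : ∀ i : Fin m, Function.Injective (C i)
  cubic : ∀ v : Fin m,
    (Finset.univ.filter (fun p : Fin m × Fin 3 => C p.1 p.2 = v)).card = 3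

/-- `M` is a one-in-three model of `φ`: every clause contains exactly one variable of `M`. -/
def SatInstance.model {m : ℕ} (φ : SatInstance m) (M : Set (Fin m)) : Prop :=
  ∀ i : Fin m, ∃! r : Fin 3, φ.C i r ∈ M

/-! ## Events of the gadgets -/

inductive Ev where
  | k | z | z0 | z1 | o0 | o1 | o2 | u
  | kj (j : ℕ)  -- the interface events k_j
  | x (i : ℕ)   -- the events x_i
  | p (i : ℕ)   -- the events p_i
  | vj (j : ℕ)  -- the events v_j
  | X (v : ℕ)   -- the variable events X_v
deriving DecidableEq

/-! ## The gadget TSs (states are pairs (tag, position)) -/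

/-- `H_0`, with `h_{0,i} = (0,i)`. -/
def H0 (b : ℕ) : TS (ℕ × ℕ) Ev :=
  (TS.chain (List.replicate b Ev.k ++ List.replicate b Ev.z ++ [Ev.o0] ++
    List.replicate b Ev.k ++ List.replicate b Ev.z ++ List.replicate b Ev.o1 ++
    List.replicate b Ev.k)).mapStates (fun i => (0, i))

/-- `H_1`, with `h_{1,i} = (0,i)`. -/
def H1 (b : ℕ) : TS (ℕ × ℕ) Ev :=
  (TS.chain (List.replicate b Ev.k ++ [Ev.z0, Ev.o0] ++ List.replicate b Ev.k ++
    [Ev.z1, Ev.z0, Ev.o2] ++ List.replicate b Ev.k)).mapStates (fun i => (0, i))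

/-- `H_2`, with `h_{2,i} = (0,i)`. -/
def H2 (b : ℕ) : TS (ℕ × ℕ) Ev :=
  (TS.chain (List.replicate b Ev.k ++ [Ev.o0] ++ List.replicate b Ev.k ++
    [Ev.o2] ++ List.replicate b Ev.k)).mapStates (fun i => (0, i))

/-- `D_{j,0}`, with `d_{j,0,i} = (j+1,i)`. -/
def D0 (b j : ℕ) : TS (ℕ × ℕ) Ev :=
  (TS.chain ([Ev.o0, Ev.kj j] ++ List.replicate (b+1) Ev.o1)).mapStates
    (fun i => (j + 1, i))

/-- `D_{j,1}`, with `d_{j,1,i} = (j+1,i)`. -/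
def D1 (b j : ℕ) : TS (ℕ × ℕ) Ev :=
  (TS.chain [Ev.o0, Ev.kj j, Ev.o2]).mapStates (fun i => (j + 1, i))

/-- The word of the gadget `T_{i,a}` (`a ∈ {0,1,2}`) of the translator `T`. -/
def Tword (b : ℕ) {m : ℕ} (φ : SatInstance m) (i : Fin m) (a : Fin 3) : List Ev :=
  if a = 0 then
    [Ev.kj (6 * (i : ℕ))] ++ List.replicate b (Ev.X ((φ.C i 0 : Fin m) : ℕ)) ++
    [Ev.x (i : ℕ)] ++ List.replicate b (Ev.X ((φ.C i 2 : Fin m) : ℕ)) ++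
    [Ev.kj (6 * (i : ℕ) + 1)]
  else if a = 1 then
    [Ev.kj (6 * (i : ℕ) + 2)] ++ List.replicate b (Ev.X ((φ.C i 1 : Fin m) : ℕ)) ++
    [Ev.p (i : ℕ), Ev.kj (6 * (i : ℕ) + 3)]
  else
    [Ev.kj (6 * (i : ℕ) + 4), Ev.x (i : ℕ), Ev.p (i : ℕ), Ev.kj (6 * (i : ℕ) + 5)]

/-- The gadget `T_{i,a}` of the translator `T`, with states `t_{i,a,pos} = (tag, pos)`. -/
def Tgad (b tag : ℕ) {m : ℕ} (φ : SatInstance m) (i : Fin m) (a : Fin 3) :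
    TS (ℕ × ℕ) Ev :=
  (TS.chain (Tword b φ i a)).mapStates (fun pos => (tag, pos))

/-- The translator `T = U(T_{0,0}, T_{0,1}, T_{0,2}, …, T_{m-1,2})` (standalone,
with `t_{i,a,pos} = (3i+a+1, pos)`). -/
def Ttrans (b : ℕ) {m : ℕ} (φ : SatInstance m) : TS (ℕ × ℕ) Ev :=
  TS.unionFam (fun q : Fin m × Fin 3 => Tgad b (3 * (q.1 : ℕ) + (q.2 : ℕ) + 1) φ q.1 q.2)

/-- `H_3`, with `h_{3,0,i} = (0,i)` and `h_{3,1,i} = (1,i)`: the union of the path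
`h_{3,0,0} --k^b--> h_{3,0,b}` and the path
`h_{3,0,0} --u--> h_{3,1,0} --k^{b-1}--> h_{3,1,b-1} --z--> h_{3,0,b}`. -/
def H3 (b : ℕ) : TS (ℕ × ℕ) Ev :=
  TS.unionFam (fun c : Bool =>
    if c then (TS.chain (List.replicate b Ev.k)).mapStates (fun i => (0, i))
    else (TS.chain ([Ev.u] ++ List.replicate (b-1) Ev.k ++ [Ev.z])).mapStates
      (fun i => if i = 0 then (0, 0) else if i = b + 1 then (0, b) else (1, i - 1)))

/-- The set `E_0 = {(m,m) : 1 ≤ m ≤ b} ∪ {0}`. -/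
def Ezero (b : ℕ) : Set Tev :=
  {e | (∃ q, 1 ≤ q ∧ q ≤ b ∧ e = Tev.pr q q) ∨ e = Tev.gr 0}

/-- The first row `f_{j,0,0} --k^b--> f_{j,0,b}` of `F_j`, with `f_{j,0,i} = (4j+2, i)`. -/
def Fch0 (b j : ℕ) : TS (ℕ × ℕ) Ev :=
  (TS.chain (List.replicate b Ev.k)).mapStates (fun i => (4 * j + 2, i))

/-- The second row `f_{j,0,0} --v_j--> f_{j,1,0} --k^{b-1}--> f_{j,1,b-1} --X_j--> f_{j,0,b}`
of `F_j`, with `f_{j,1,i} = (4j+3, i)`. -/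
def Fch1 (b j : ℕ) : TS (ℕ × ℕ) Ev :=
  (TS.chain ([Ev.vj j] ++ List.replicate (b-1) Ev.k ++ [Ev.X j])).mapStates
    (fun i => if i = 0 then (4 * j + 2, 0) else if i = b + 1 then (4 * j + 2, b)
      else (4 * j + 3, i - 1))

/-- `F_j` as the union of its two rows. -/
def Fgad (b j : ℕ) : TS (ℕ × ℕ) Ev :=
  TS.unionFam (fun c : Bool => if c then Fch0 b j else Fch1 b j)

/-- `G_j`, with `g_{j,i} = (4j+4, i)`. -/
def Ggad (b j : ℕ) : TS (ℕ × ℕ) Ev :=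
  (TS.chain (List.replicate b Ev.k ++ [Ev.X j])).mapStates (fun i => (4 * j + 4, i))

/-- The clause gadget `T_i` (of the translator for the group-extended types),
with `t_{i,pos} = (4i+5, pos)`. -/
def Tgad2 (b : ℕ) {m : ℕ} (φ : SatInstance m) (i : Fin m) : TS (ℕ × ℕ) Ev :=
  (TS.chain (List.replicate b Ev.k ++
    [Ev.X ((φ.C i 0 : Fin m) : ℕ), Ev.X ((φ.C i 1 : Fin m) : ℕ),
     Ev.X ((φ.C i 2 : Fin m) : ℕ), Ev.z] ++ List.replicate b Ev.k)).mapStates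
    (fun pos => (4 * (i : ℕ) + 5, pos))

/-- The translator `T_τ = U(F_0, G_0, …, F_{m-1}, G_{m-1}, T_0, …, T_{m-1})`
for the group-extended types. -/
def Ttrans2fam (b : ℕ) {m : ℕ} (φ : SatInstance m) : Fin m × Fin 3 → TS (ℕ × ℕ) Ev :=
  fun q => if q.2 = 0 then Fgad b (q.1 : ℕ)
    else if q.2 = 1 then Ggad b (q.1 : ℕ) else Tgad2 b φ q.1

def Ttrans2 (b : ℕ) {m : ℕ} (φ : SatInstance m) : TS (ℕ × ℕ) Ev :=
  TS.unionFam (Ttrans2fam b φ)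
/-! ## The key unions and the unions of key and translator -/

/-- The family of constituents of the key `K_{τ^b_0} = U(H_0, D_{0,0},…,D_{6m-1,0})`. -/
def K0fam (b m : ℕ) : Option (Fin (6 * m)) → TS (ℕ × ℕ) Ev
  | none => H0 b
  | some j => D0 b (j : ℕ)

def K0 (b m : ℕ) : TS (ℕ × ℕ) Ev := TS.unionFam (K0fam b m)

/-- The family of constituents of the key `K_{τ^b_1} = U(H_1, D_{0,1},…,D_{6m-1,1})`. -/
def K1fam (b m : ℕ) : Option (Fin (6 * m)) → TS (ℕ × ℕ) Ev
  | none => H1 b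
  | some j => D1 b (j : ℕ)

def K1 (b m : ℕ) : TS (ℕ × ℕ) Ev := TS.unionFam (K1fam b m)

/-- The family of constituents of the key `K = U(H_2, D_{0,1},…,D_{6m-1,1})`. -/
def K2fam (b m : ℕ) : Option (Fin (6 * m)) → TS (ℕ × ℕ) Ev
  | none => H2 b
  | some j => D1 b (j : ℕ)

def K2 (b m : ℕ) : TS (ℕ × ℕ) Ev := TS.unionFam (K2fam b m)

/-- The family of constituents of `U_{τ^b_0} = U(H_0, D_{0,0},…,D_{6m-1,0}, T)`. -/
def U0fam (b : ℕ) {m : ℕ} (φ : SatInstance m) :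
    Option (Fin (6 * m) ⊕ Fin m × Fin 3) → TS (ℕ × ℕ) Ev
  | none => H0 b
  | some (.inl j) => D0 b (j : ℕ)
  | some (.inr q) => Tgad b (6 * m + 1 + 3 * (q.1 : ℕ) + (q.2 : ℕ)) φ q.1 q.2

def U0 (b : ℕ) {m : ℕ} (φ : SatInstance m) : TS (ℕ × ℕ) Ev := TS.unionFam (U0fam b φ)

/-- The family of constituents of `U_{τ^b_1} = U(H_1, D_{0,1},…,D_{6m-1,1}, T)`. -/
def U1fam (b : ℕ) {m : ℕ} (φ : SatInstance m) :
    Option (Fin (6 * m) ⊕ Fin m × Fin 3) → TS (ℕ × ℕ) Ev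
  | none => H1 b
  | some (.inl j) => D1 b (j : ℕ)
  | some (.inr q) => Tgad b (6 * m + 1 + 3 * (q.1 : ℕ) + (q.2 : ℕ)) φ q.1 q.2

def U1 (b : ℕ) {m : ℕ} (φ : SatInstance m) : TS (ℕ × ℕ) Ev := TS.unionFam (U1fam b φ)

/-- The family of constituents of `W = U(H_2, D_{0,1},…,D_{6m-1,1}, T)`. -/
def Wfam (b : ℕ) {m : ℕ} (φ : SatInstance m) :
    Option (Fin (6 * m) ⊕ Fin m × Fin 3) → TS (ℕ × ℕ) Ev
  | none => H2 b
  | some (.inl j) => D1 b (j : ℕ)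
  | some (.inr q) => Tgad b (6 * m + 1 + 3 * (q.1 : ℕ) + (q.2 : ℕ)) φ q.1 q.2

def Wun (b : ℕ) {m : ℕ} (φ : SatInstance m) : TS (ℕ × ℕ) Ev := TS.unionFam (Wfam b φ)

/-- The family of constituents of
`U_τ = U(H_3, F_0, G_0, …, F_{m-1}, G_{m-1}, T_0, …, T_{m-1})` for `τ ∈ {τ^b_2, τ^b_3}`. -/
def U2fam (b : ℕ) {m : ℕ} (φ : SatInstance m) :
    Option (Fin m × Fin 3) → TS (ℕ × ℕ) Ev
  | none => H3 b
  | some q => Ttrans2fam b φ q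

def U2 (b : ℕ) {m : ℕ} (φ : SatInstance m) : TS (ℕ × ℕ) Ev := TS.unionFam (U2fam b φ)

/-! ## The joining `A(U)` -/

/-- The joining `A(U)` of a union `U = U(A_0,…,A_n)` of initialized TSs (`A_i`
initialized at `s0 i`): fresh connector states `q_i = Sum.inr i`, fresh events
`w_{i+1} = Sum.inr (Sum.inl i)` (`i : Fin n`) and `y_i = Sum.inr (Sum.inr i)`,
and transitions `q_i --w_{i+1}--> q_{i+1}` and `q_i --y_i--> s0 i`. -/
def joining {S E : Type} {n : ℕ} (F : Fin (n + 1) → TS S E) (s0 : Fin (n + 1) → S)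
    (h0 : ∀ i, s0 i ∈ (F i).states) :
    TS (S ⊕ Fin (n + 1)) (E ⊕ (Fin n ⊕ Fin (n + 1))) where
  states := {st | (∃ a ∈ (TS.unionFam F).states, st = Sum.inl a) ∨ ∃ q, st = Sum.inr q}
  events := {ev | (∃ e ∈ (TS.unionFam F).events, ev = Sum.inl e) ∨ ∃ c, ev = Sum.inr c}
  tr st ev st' :=
    (∃ a e a', (TS.unionFam F).tr a e a' ∧
        st = Sum.inl a ∧ ev = Sum.inl e ∧ st' = Sum.inl a') ∨
    (∃ i : Fin n, st = Sum.inr i.castSucc ∧ ev = Sum.inr (Sum.inl i) ∧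
        st' = Sum.inr i.succ) ∨
    (∃ i : Fin (n + 1), st = Sum.inr i ∧ ev = Sum.inr (Sum.inr i) ∧
        st' = Sum.inl (s0 i))
  tr_mem := by
    rintro st ev st' (⟨a, e, a', h, rfl, rfl, rfl⟩ | ⟨i, rfl, rfl, rfl⟩ | ⟨i, rfl, rfl, rfl⟩)
    · obtain ⟨h1, h2, h3⟩ := (TS.unionFam F).tr_mem h
      exact ⟨Or.inl ⟨a, h1, rfl⟩, Or.inl ⟨e, h2, rfl⟩, Or.inl ⟨a', h3, rfl⟩⟩
    · exact ⟨Or.inr ⟨_, rfl⟩, Or.inr ⟨_, rfl⟩, Or.inr ⟨_, rfl⟩⟩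
    · exact ⟨Or.inr ⟨_, rfl⟩, Or.inr ⟨_, rfl⟩,
        Or.inl ⟨_, Set.mem_iUnion.2 ⟨i, h0 i⟩, rfl⟩⟩

/-!
Let `shift e ∈ ℤ/(b+1)` be the displacement of a `τ`-event `e`, so that `s --e--> s'` in `τ`
gives `s' ≡ s + shift e`. Since `sig(k) = (0,1)` or `(1,0)`, `sup` moves by `δ = ±1` along
`k`, so a path `k^b` runs from one end of `{0,…,b}` to the other and a path `k^{b-1}` stops
at most one step short of that end. In `F_j` this leaves `shift (sig X_j) ∈ {0, δ}`. In `T_i`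
the `z`-step does not move `sup`, so the three `X`-steps lead from one end of `{0,…,b}` to the
other: their shifts add up to `-b δ ≡ δ`. Hence the variables `X_j` with `shift (sig X_j) = δ`
meet each clause in `n` variables with `n ≡ 1 (mod b+1)`, and `n ≤ 3 < b + 2` forces `n = 1`.
-/

def Tev.shift (b : ℕ) (e : Tev) : ZMod (b + 1) := e.absv + e.plus - e.minus

lemma tevStep_pr_eq_some {b s s' m n : ℕ} (h : tevStep b s (.pr m n) = some s') :
    (s' : ℤ) = s - m + n := by
  simp only [tevStep] at h
  split_ifs at h with hc
  simp only [Option.some.injEq] at h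
  omega

lemma tevStep_eq_some_cast {b s s' : ℕ} {e : Tev} (h : tevStep b s e = some s') :
    (s' : ZMod (b + 1)) = s + e.shift b := by
  cases e with
  | pr m n =>
    have hs' := congrArg (Int.cast : ℤ → ZMod (b + 1)) (tevStep_pr_eq_some h)
    push_cast at hs'
    rw [hs', Tev.shift, Tev.absv, Tev.plus, Tev.minus]
    ring
  | gr c =>
    simp only [tevStep, Option.some.injEq] at h
    rw [← h, ZMod.natCast_mod, Tev.shift, Tev.absv, Tev.plus, Tev.minus]
    push_cast
    ring

lemma Tev.shift_eq_zero_of_mem_Ezero {b : ℕ} {e : Tev} (he : e ∈ Ezero b) : e.shift b = 0 := by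
  rcases he with ⟨q, -, -, rfl⟩ | rfl <;> simp [Tev.shift, Tev.absv, Tev.plus, Tev.minus]

lemma Nat.eq_one_of_cast_zmod_eq_one {b n : ℕ} (hb : 1 ≤ b) (hn : n ≤ b + 1)
    (h : (n : ZMod (b + 1)) = 1) : n = 1 := by
  have hdvd : ((b + 1 : ℕ) : ℤ) ∣ (n : ℤ) - 1 := by
    rw [← ZMod.intCast_zmod_eq_zero_iff_dvd]
    push_cast
    rw [h, sub_self]
  have := Int.eq_zero_of_abs_lt_dvd hdvd (abs_lt.2 ⟨by omega, by omega⟩)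
  omega

section Region

variable {b t : ℕ} {S E : Type} {A : TS S E} (R : Region b t A)

lemma Region.sup_le_of_tr {s s' : S} {e : E} (h : A.tr s e s') : R.sup s ≤ b ∧ R.sup s' ≤ b :=
  ⟨R.sup_le _ (A.tr_mem h).1, R.sup_le _ (A.tr_mem h).2.2⟩

lemma Region.sup_path_pr {e : E} {p q : ℕ} (he : R.sig e = .pr p q) (st : ℕ → S) (r : ℕ)
    (hst : ∀ i < r, A.tr (st i) e (st (i + 1))) :
    (R.sup (st r) : ℤ) = R.sup (st 0) + r * ((q : ℤ) - p) := by
  induction r with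
  | zero => simp
  | succ r ih =>
    have hstep := R.resp (hst r r.lt_succ_self)
    rw [he] at hstep
    rw [tevStep_pr_eq_some hstep, ih fun i hi => hst i (by omega)]
    push_cast
    ring

end Region

section Transitions

variable (b : ℕ) {m : ℕ} (φ : SatInstance m) (v : Fin m)

lemma Ttrans2_tr_Fch0_k {i : ℕ} (hi : i < b) :
    (Ttrans2 b φ).tr (4 * v + 2, i) Ev.k (4 * v + 2, i + 1) :=
  ⟨(v, 0), true, i, i + 1, ⟨by simp [hi], rfl⟩, rfl, rfl⟩

lemma Ttrans2_tr_Fch1_k {i : ℕ} (hi : i + 1 < b) :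
    (Ttrans2 b φ).tr (4 * v + 3, i) Ev.k (4 * v + 3, i + 1) :=
  ⟨(v, 0), false, i + 1, i + 2,
    ⟨by simp [List.getElem?_append, show i < b - 1 by omega], rfl⟩,
    by simp; omega, by simp; omega⟩

lemma Ttrans2_tr_Fch1_X (hb : 1 ≤ b) :
    (Ttrans2 b φ).tr (4 * v + 3, b - 1) (Ev.X v) (4 * v + 2, b) :=
  ⟨(v, 0), false, b, b + 1,
    ⟨by obtain ⟨c, rfl⟩ := Nat.exists_eq_add_of_le' hb; simp, rfl⟩,
    by simp; omega, by simp⟩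

lemma Ttrans2_tr_Tgad2_k_left {p : ℕ} (hp : p < b) :
    (Ttrans2 b φ).tr (4 * v + 5, p) Ev.k (4 * v + 5, p + 1) :=
  ⟨(v, 2), p, p + 1, ⟨by simp [List.getElem?_append, hp], rfl⟩, rfl, rfl⟩

lemma Ttrans2_tr_Tgad2_X (r : Fin 3) :
    (Ttrans2 b φ).tr (4 * v + 5, b + r) (Ev.X (φ.C v r)) (4 * v + 5, b + r + 1) :=
  ⟨(v, 2), b + r, b + r + 1, ⟨by fin_cases r <;> simp, rfl⟩, rfl, rfl⟩

lemma Ttrans2_tr_Tgad2_z :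
    (Ttrans2 b φ).tr (4 * v + 5, b + 3) Ev.z (4 * v + 5, b + 4) :=
  ⟨(v, 2), b + 3, b + 4, ⟨by simp, rfl⟩, rfl, rfl⟩

lemma Ttrans2_tr_Tgad2_k_right {p : ℕ} (hp : p < b) :
    (Ttrans2 b φ).tr (4 * v + 5, b + 4 + p) Ev.k (4 * v + 5, b + 4 + p + 1) :=
  ⟨(v, 2), b + 4 + p, b + 4 + p + 1, ⟨by simp [List.getElem?_append,
    show ¬ b + 4 + p < b by omega, show b + 4 + p - b = p + 4 by omega, hp], rfl⟩, rfl, rfl⟩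

end Transitions

section Translator

variable {b t m : ℕ} {φ : SatInstance m} (R : Region b t (Ttrans2 b φ)) {p q : ℕ}

lemma shift_sig_X_eq_zero_or_eq (hb : 2 ≤ b) (hk : R.sig Ev.k = .pr p q)
    (hpq : (q : ℤ) - p = 1 ∨ (q : ℤ) - p = -1) (v : Fin m) :
    (R.sig (Ev.X v)).shift b = 0 ∨
      (R.sig (Ev.X v)).shift b = ((q - p : ℤ) : ZMod (b + 1)) := by
  have row0 := R.sup_path_pr hk (fun i => (4 * v + 2, i)) b
    fun i hi => Ttrans2_tr_Fch0_k b φ v hi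
  have row1 := R.sup_path_pr hk (fun i => (4 * v + 3, i)) (b - 1)
    fun i hi => Ttrans2_tr_Fch1_k b φ v (by omega)
  have hX := Ttrans2_tr_Fch1_X b φ v (by omega)
  have bd0 := R.sup_le_of_tr (Ttrans2_tr_Fch0_k b φ v (i := 0) (by omega))
  have bd1 := R.sup_le_of_tr (Ttrans2_tr_Fch1_k b φ v (i := 0) (by omega))
  have bdX := R.sup_le_of_tr hX
  have hdiff : (R.sup (4 * v + 2, b) : ℤ) - R.sup (4 * v + 3, b - 1) = 0 ∨
      (R.sup (4 * v + 2, b) : ℤ) - R.sup (4 * v + 3, b - 1) = (q : ℤ) - p := by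
    rw [Nat.cast_sub (by omega : 1 ≤ b)] at row1
    rcases hpq with h | h <;> rw [h] at row0 row1 ⊢ <;> omega
  have hshift : (R.sig (Ev.X v)).shift b =
      (((R.sup (4 * v + 2, b) : ℤ) - R.sup (4 * v + 3, b - 1) : ℤ) : ZMod (b + 1)) := by
    push_cast
    rw [tevStep_eq_some_cast (R.resp hX)]
    ring
  rcases hdiff with h | h
  · left
    rw [hshift, h, Int.cast_zero]
  · right
    rw [hshift, h]

lemma sum_shift_sig_X_clause (hb : 1 ≤ b) (hz : R.sig Ev.z ∈ Ezero b)
    (hk : R.sig Ev.k = .pr p q) (hpq : (q : ℤ) - p = 1 ∨ (q : ℤ) - p = -1) (i : Fin m) :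
    ∑ r : Fin 3, (R.sig (Ev.X (φ.C i r))).shift b = ((q - p : ℤ) : ZMod (b + 1)) := by
  have left := R.sup_path_pr hk (fun j => (4 * i + 5, j)) b
    fun j hj => Ttrans2_tr_Tgad2_k_left b φ i hj
  have right := R.sup_path_pr hk (fun j => (4 * i + 5, b + 4 + j)) b
    fun j hj => Ttrans2_tr_Tgad2_k_right b φ i hj
  rw [add_zero] at right
  have hX0 := Ttrans2_tr_Tgad2_X b φ i 0
  have hX1 := Ttrans2_tr_Tgad2_X b φ i 1
  have hX2 := Ttrans2_tr_Tgad2_X b φ i 2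
  have hZ := Ttrans2_tr_Tgad2_z b φ i
  have hlast := Ttrans2_tr_Tgad2_k_right b φ i (p := b - 1) (by omega)
  rw [show b + 4 + (b - 1) + 1 = b + 4 + b by omega] at hlast
  have bd0 := R.sup_le_of_tr (Ttrans2_tr_Tgad2_k_left b φ i (p := 0) (by omega))
  have bdX := R.sup_le_of_tr hX0
  have bdZ := R.sup_le_of_tr hZ
  have bdlast := R.sup_le_of_tr hlast
  simp only [Fin.val_zero, Fin.val_one, Fin.val_two, add_zero] at hX0 hX1 hX2 bdX
  -- the two paths `k^b` put `t_{i,b}` and `t_{i,b+4}` at opposite ends of `{0,…,b}`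
  have hends : (R.sup (4 * i + 5, b + 4) : ℤ) - R.sup (4 * i + 5, b) =
      ((q : ℤ) - p) - (b + 1) * ((q : ℤ) - p) := by
    rcases hpq with h | h <;> rw [h] at left right ⊢ <;> omega
  have hends' := congrArg (Int.cast : ℤ → ZMod (b + 1)) hends
  push_cast at hends'
  have hb1 : ((b + 1 : ℕ) : ZMod (b + 1)) = 0 := ZMod.natCast_self _
  push_cast at hb1
  rw [Fin.sum_univ_three]
  push_cast
  linear_combination hends' - tevStep_eq_some_cast (R.resp hX0)
    - tevStep_eq_some_cast (R.resp hX1) - tevStep_eq_some_cast (R.resp hX2)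
    - tevStep_eq_some_cast (R.resp hZ) - Tev.shift_eq_zero_of_mem_Ezero hz
    - ((q : ZMod (b + 1)) - p) * hb1

end Translator

theorem stmt11_general (b t : ℕ) (hb : 2 ≤ b)
    {m : ℕ} (φ : SatInstance m)
    (R : Region b t (Ttrans2 b φ))
    (hz : R.sig Ev.z ∈ Ezero b)
    (hk : R.sig Ev.k = Tev.pr 0 1 ∨ R.sig Ev.k = Tev.pr 1 0) :
    ∃ M : Set (Fin m), φ.model M := by
  obtain ⟨p, q, hkpq, hpq⟩ : ∃ p q : ℕ, R.sig Ev.k = .pr p q ∧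
      ((q : ℤ) - p = 1 ∨ (q : ℤ) - p = -1) := by
    rcases hk with hk | hk <;> exact ⟨_, _, hk, by norm_num⟩
  set δ : ZMod (b + 1) := ((q - p : ℤ) : ZMod (b + 1))
  have hδδ : δ * δ = 1 := by rcases hpq with h | h <;> simp only [δ, h] <;> norm_num
  set M : Set (Fin m) := {v | (R.sig (Ev.X v)).shift b = δ}
  refine ⟨M, fun i => ?_⟩
  have hX (r : Fin 3) : (R.sig (Ev.X (φ.C i r))).shift b = if φ.C i r ∈ M then δ else 0 := by
    by_cases hM : φ.C i r ∈ M
    · rw [if_pos hM]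
      exact hM
    · rw [if_neg hM]
      exact (shift_sig_X_eq_zero_or_eq R hb hkpq hpq (φ.C i r)).resolve_right hM
  have hcard : ((Finset.univ.filter fun r => φ.C i r ∈ M).card : ZMod (b + 1)) * δ = δ := by
    rw [← nsmul_eq_mul, ← Finset.sum_const, Finset.sum_filter,
      ← Finset.sum_congr rfl fun r _ => hX r]
    exact sum_shift_sig_X_clause R (by omega) hz hkpq hpq i
  have hcard_le : (Finset.univ.filter fun r => φ.C i r ∈ M).card ≤ b + 1 :=
    (Finset.card_le_univ _).trans (by simp; omega)
  have hone := Nat.eq_one_of_cast_zmod_eq_one (by omega) hcard_le <| by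
    calc _ = _ * δ * δ := by rw [mul_assoc, hδδ, mul_one]
      _ = 1 := by rw [hcard, hδδ]
  simpa using Finset.card_eq_one_iff_existsUnique.1 hone

/-- Completeness of the translator `T_τ`, `τ ∈ {τ^b_2, τ^b_3}`:
if a `τ`-region of `T_τ` satisfies `sig(z) ∈ E_0` and `sig(k) ∈ {(0,1),(1,0)}`, then
`φ` has a one-in-three model. -/
theorem stmt11 (b t : ℕ) (hb : 2 ≤ b) (ht : t = 2 ∨ t = 3)
    {m : ℕ} (hm : 1 ≤ m) (φ : SatInstance m)
    (R : Region b t (Ttrans2 b φ))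
    (hz : R.sig Ev.z ∈ Ezero b)
    (hk : R.sig Ev.k = Tev.pr 0 1 ∨ R.sig Ev.k = Tev.pr 1 0) :
    ∃ M : Set (Fin m), φ.model M :=
  stmt11_general b t hb φ R hz hk
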